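/- Let s and d be coprime positive integers and h a positive integer, and consider labels L(i,j) = (s+d)·i + d·j for i ∈ ℤ and j ∈ {0,1,…,⌊(s+d)/2⌋}. Then: (a) if h ≢ 0 (mod s+d) and, when s+d is even, h ≢ (s+d)/2 (mod s+d), there exists a unique pair (i,j) with L(i,j) = h or L(i,j) = −h; (b) if h ≡ 0 (mod s+d), then there are exactly two pairs (i,j) with L(i,j) ∈ {h,−h}, one with L(i,j)=h and one with L(i,j)=−h, and both have j=0; (c) if s+d is even and h ≡ (s+d)/2 (mod s+d), then there are exactly two pairs (i,j) with L(i,j) ∈ {h,−h}, one with L(i,j)=h and one with L(i,j)=−h, and both have j=(s+d)/2. -/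

import Mathlib

/-- A strict partition, encoded as a strictly decreasing list of positive integers. -/
def IsStrictPartition (l : List ℕ) : Prop :=
  List.Pairwise (· > ·) l ∧ ∀ x ∈ l, 0 < x

/-- The set of bar lengths in the (0-indexed) `i`-th row of a strict partition `l`:
`{λᵢ + λⱼ : i < j ≤ ℓ} ∪ ({1,…,λᵢ} \ {λᵢ − λⱼ : i < j ≤ ℓ})`. -/
def barLengths (l : List ℕ) (i : ℕ) : Finset ℕ :=
  ((Finset.Ioo i l.length).image fun j => l.getD i 0 + l.getD j 0) ∪
    (Finset.Icc 1 (l.getD i 0) \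
      ((Finset.Ioo i l.length).image fun j => l.getD i 0 - l.getD j 0))

/-- `l` is an `s`-bar-core: `s` is not a bar length in any row. -/
def IsBarCore (l : List ℕ) (s : ℕ) : Prop :=
  ∀ i, i < l.length → s ∉ barLengths l i

/-- The shifted hook length of the box in row `i`, column `c` (both 0-indexed, where the
`i`-th row of the shifted Young diagram occupies columns `i, …, λᵢ + i − 1`): the number of
boxes to its right in row `i` together with itself, plus the number of boxes below it in
column `c`, plus the number of boxes of row `c + 1` if that row exists. -/
def shiftedHook (l : List ℕ) (i c : ℕ) : ℕ :=
  (l.getD i 0 + i - c) +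
    ((Finset.Ioc i c).filter fun i' => c < l.getD i' 0 + i').card +
    l.getD (c + 1) 0

/-- `l` is an `s`-CSYD: no shifted hook length of the shifted Young diagram `S(λ)`
is divisible by `s`. -/
def IsCSYD (l : List ℕ) (s : ℕ) : Prop :=
  ∀ i c, i < l.length → i ≤ c → c < l.getD i 0 + i → ¬ s ∣ shiftedHook l i c

/-- The `i`-th part (0-indexed) of the doubled distinct partition `λλ`, read off from the
Frobenius symbol `(λ₁,…,λ_ℓ ; λ₁−1,…,λ_ℓ−1)`: for `i < ℓ` the part is `λᵢ + i + 1`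
(1-indexed: `λᵢ + i`), and for `ℓ ≤ i` the part is determined by the column lengths
`λⱼ + j − 1` (1-indexed). -/
def ddPart (l : List ℕ) (i : ℕ) : ℕ :=
  if i < l.length then l.getD i 0 + i + 1
  else ((Finset.range l.length).filter fun j => i + 1 ≤ l.getD j 0 + j).card

/-- The doubled distinct partition `λλ` of a strict partition `l`, as a list of parts. -/
def doubledDistinct (l : List ℕ) : List ℕ :=
  (List.range (l.getD 0 0)).map (ddPart l)

/-- Ordinary hook length of the box in row `i`, column `j` (0-indexed) of a partition `m`. -/
def hookLen (m : List ℕ) (i j : ℕ) : ℕ :=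
  (m.getD i 0 - j) + ((Finset.Ioo i m.length).filter fun i' => j < m.getD i' 0).card

/-- `m` is an `s`-core: no hook length is divisible by `s`. -/
def IsCore (m : List ℕ) (s : ℕ) : Prop :=
  ∀ i j, i < m.length → j < m.getD i 0 → ¬ s ∣ hookLen m i j

/-- NE lattice paths from `(0,0)` to `(a,b)`, encoded as lists of steps where
`false` is an east step `E = (1,0)` and `true` is a north step `N = (0,1)`. -/
def NEPaths (a b : ℕ) : Set (List Bool) :=
  {w | w.count false = a ∧ w.count true = b}

/-- A step of a free Motzkin path. -/
inductive MStep : Type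
  | U : MStep
  | F : MStep
  | D : MStep
deriving DecidableEq

/-- The height change of a step: `U = (1,1)`, `F = (1,0)`, `D = (1,−1)`. -/
def MStep.ht : MStep → ℤ
  | .U => 1
  | .F => 0
  | .D => -1

/-- Free Motzkin paths of type `(p,q)`: lattice paths from `(0,0)` to `(p,q)` with steps
`U = (1,1)`, `F = (1,0)` and `D = (1,−1)`, encoded as lists of steps. -/
def FreeMotzkin (p : ℕ) (q : ℤ) : Set (List MStep) :=
  {w | w.length = p ∧ (w.map MStep.ht).sum = q}

/-- `multinom n a b c = n! / (a! · b! · c!)`. -/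
def multinom (n a b c : ℕ) : ℕ :=
  n.factorial / (a.factorial * b.factorial * c.factorial)


section AbacusAux

private lemma abacus_cong_iff {n d : ℕ} (hn : 0 < n) (hcop : Nat.Coprime d n) (t : ℤ) (j : ℕ) :
    (n : ℤ) ∣ t - d * j ↔ (j : ZMod n) = (t : ZMod n) * (d : ZMod n)⁻¹ := by
  haveI : NeZero n := ⟨hn.ne'⟩
  have hu : (d : ZMod n) * (d : ZMod n)⁻¹ = 1 := ZMod.coe_mul_inv_eq_one d hcop
  constructor
  · intro hdvd
    have h0 : ((t - d * j : ℤ) : ZMod n) = 0 := (ZMod.intCast_zmod_eq_zero_iff_dvd _ _).2 hdvd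
    push_cast at h0
    have h2 : (d : ZMod n) * j = t := by linear_combination -h0
    calc (j : ZMod n) = ((d : ZMod n) * (d : ZMod n)⁻¹) * j := by rw [hu, one_mul]
      _ = (d : ZMod n)⁻¹ * ((d : ZMod n) * j) := by ring
      _ = (t : ZMod n) * (d : ZMod n)⁻¹ := by rw [h2]; ring
  · intro hj
    rw [← ZMod.intCast_zmod_eq_zero_iff_dvd]
    push_cast
    linear_combination -(d : ZMod n) * hj - (t : ZMod n) * hu

private lemma abacus_forced {n d : ℕ} (hn : 0 < n) (hcop : Nat.Coprime d n) (t : ℤ) (j : ℕ)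
    (hjn : j < n) (hjc : (j : ZMod n) = (t : ZMod n) * (d : ZMod n)⁻¹) :
    ∀ p : ℤ × ℕ, p.2 ≤ n / 2 → (n : ℤ) * p.1 + d * p.2 = t → p.2 = j := by
  haveI : NeZero n := ⟨hn.ne'⟩
  intro p hp2 hpe
  have hdvd : (n : ℤ) ∣ t - d * p.2 := ⟨p.1, by linarith⟩
  have h1 : ((p.2 : ℕ) : ZMod n) = (j : ZMod n) :=
    ((abacus_cong_iff hn hcop t p.2).1 hdvd).trans hjc.symm
  have h2 := (ZMod.natCast_eq_natCast_iff _ _ _).1 h1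
  have hplt : p.2 < n := lt_of_le_of_lt hp2 (Nat.div_lt_self hn one_lt_two)
  simpa [Nat.ModEq, Nat.mod_eq_of_lt hplt, Nat.mod_eq_of_lt hjn] using h2

private lemma abacus_exu {n d : ℕ} (hn : 0 < n) (hcop : Nat.Coprime d n) (t : ℤ) (j : ℕ)
    (hj : j ≤ n / 2) (hjc : (j : ZMod n) = (t : ZMod n) * (d : ZMod n)⁻¹) :
    ∃! p : ℤ × ℕ, p.2 ≤ n / 2 ∧ (n : ℤ) * p.1 + d * p.2 = t := by
  obtain ⟨i, hi⟩ := (abacus_cong_iff hn hcop t j).2 hjc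
  have hjn : j < n := lt_of_le_of_lt hj (Nat.div_lt_self hn one_lt_two)
  refine ⟨(i, j), ⟨hj, by dsimp only; linarith⟩, ?_⟩
  rintro ⟨i', j'⟩ ⟨hj', he'⟩
  have hj'' : j' = j := abacus_forced hn hcop t j hjn hjc (i', j') hj' he'
  subst hj''
  have hi' : i' = i := by
    have hnz : (n : ℤ) ≠ 0 := by exact_mod_cast hn.ne'
    have : (n : ℤ) * i' = (n : ℤ) * i := by dsimp only at he'; linarith
    exact mul_left_cancel₀ hnz this
  simp [hi']

end AbacusAux

/-- positions of labels on the `(s+d‾, d)`-abacus diagram, whose position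
`(i,j)`, for `i ∈ ℤ` and `0 ≤ j ≤ ⌊(s+d)/2⌋`, is labeled by `(s+d)·i + d·j`. -/
theorem abacus_labels (s d : ℕ) (hs : 0 < s) (hd : 0 < d) (hsd : Nat.Coprime s d)
    (h : ℕ) (hh : 0 < h) :
    (¬ (s + d) ∣ h → (Even (s + d) → ¬ h ≡ (s + d) / 2 [MOD s + d]) →
      ∃! p : ℤ × ℕ, p.2 ≤ (s + d) / 2 ∧
        (((s : ℤ) + d) * p.1 + d * p.2 = h ∨ ((s : ℤ) + d) * p.1 + d * p.2 = -h)) ∧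
    ((s + d) ∣ h →
      (∃! p : ℤ × ℕ, p.2 ≤ (s + d) / 2 ∧ ((s : ℤ) + d) * p.1 + d * p.2 = h) ∧
      (∃! p : ℤ × ℕ, p.2 ≤ (s + d) / 2 ∧ ((s : ℤ) + d) * p.1 + d * p.2 = -h) ∧
      (∀ p : ℤ × ℕ, p.2 ≤ (s + d) / 2 →
        (((s : ℤ) + d) * p.1 + d * p.2 = h ∨ ((s : ℤ) + d) * p.1 + d * p.2 = -h) →
        p.2 = 0)) ∧
    (Even (s + d) → h ≡ (s + d) / 2 [MOD s + d] →
      (∃! p : ℤ × ℕ, p.2 ≤ (s + d) / 2 ∧ ((s : ℤ) + d) * p.1 + d * p.2 = h) ∧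
      (∃! p : ℤ × ℕ, p.2 ≤ (s + d) / 2 ∧ ((s : ℤ) + d) * p.1 + d * p.2 = -h) ∧
      (∀ p : ℤ × ℕ, p.2 ≤ (s + d) / 2 →
        (((s : ℤ) + d) * p.1 + d * p.2 = h ∨ ((s : ℤ) + d) * p.1 + d * p.2 = -h) →
        p.2 = (s + d) / 2)) := by
  set n := s + d with hn_def
  have hn : 0 < n := by omega
  haveI : NeZero n := ⟨hn.ne'⟩
  have hcop : Nat.Coprime d n := Nat.coprime_add_self_right.2 hsd.symm
  have hu : (d : ZMod n) * (d : ZMod n)⁻¹ = 1 := ZMod.coe_mul_inv_eq_one d hcop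
  have hcast : ((s : ℤ) + d) = (n : ℤ) := by rw [hn_def]; push_cast; ring
  simp only [hcast]
  set a : ZMod n := ((h : ℤ) : ZMod n) * (d : ZMod n)⁻¹ with ha_def
  have hhZ : ((h : ℤ) : ZMod n) = ((h : ℕ) : ZMod n) := by push_cast; ring
  have hna : ((-(h : ℤ) : ℤ) : ZMod n) * (d : ZMod n)⁻¹ = -a := by rw [ha_def]; push_cast; ring
  have hhd : ((h : ℤ) : ZMod n) = a * d := by rw [ha_def]; linear_combination -((h : ℤ) : ZMod n) * hu
  have ha0 : a = 0 ↔ n ∣ h := by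
    constructor
    · intro h0
      have h1 : ((h : ℕ) : ZMod n) = 0 := by rw [← hhZ, hhd, h0, zero_mul]
      exact (ZMod.natCast_eq_zero_iff _ _).1 h1
    · intro hdvd
      have h1 : ((h : ℕ) : ZMod n) = 0 := (ZMod.natCast_eq_zero_iff _ _).2 hdvd
      rw [ha_def, hhZ, h1, zero_mul]
  have hodd : Even n → Odd d := by
    intro he
    rcases Nat.even_or_odd d with hd2 | hd2
    · exfalso
      obtain ⟨m, hm⟩ := he
      obtain ⟨k, hk⟩ := hd2
      have h2 : (2 : ℕ) ∣ Nat.gcd s d := Nat.dvd_gcd (by omega) (by omega)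
      rw [hsd] at h2
      omega
    · exact hd2
  have hhalf : Even n → ((n / 2 : ℕ) : ZMod n) * (d : ZMod n) = ((n / 2 : ℕ) : ZMod n) := by
    intro he
    obtain ⟨k, hk⟩ := hodd he
    obtain ⟨m, hm⟩ := he
    have h1 : (n / 2) * d = n / 2 + k * n := by
      have h2 : n / 2 = m := by omega
      rw [h2, hk, hm]; ring
    have h4 : ((n / 2) * d : ℕ) ≡ (n / 2) [MOD n] := by
      show ((n / 2) * d) % n = (n / 2) % n
      rw [h1, Nat.add_mul_mod_self_right]
    have h5 := (ZMod.natCast_eq_natCast_iff _ _ _).2 h4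
    push_cast at h5
    exact h5
  have hhalfinv : Even n → ((n / 2 : ℕ) : ZMod n) * (d : ZMod n)⁻¹ = ((n / 2 : ℕ) : ZMod n) := by
    intro he
    have h5 := hhalf he
    linear_combination -(d : ZMod n)⁻¹ * h5 + ((n / 2 : ℕ) : ZMod n) * hu
  have key_half : Even n → a = ((n / 2 : ℕ) : ZMod n) → h ≡ n / 2 [MOD n] := by
    intro he ha2
    apply (ZMod.natCast_eq_natCast_iff _ _ _).1
    calc ((h : ℕ) : ZMod n) = a * d := by rw [← hhZ, hhd]
      _ = ((n / 2 : ℕ) : ZMod n) * d := by rw [ha2]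
      _ = ((n / 2 : ℕ) : ZMod n) := hhalf he
  have key_half' : Even n → h ≡ n / 2 [MOD n] → a = ((n / 2 : ℕ) : ZMod n) := by
    intro he hm
    have h2 : ((h : ℕ) : ZMod n) = ((n / 2 : ℕ) : ZMod n) := (ZMod.natCast_eq_natCast_iff _ _ _).2 hm
    rw [ha_def, hhZ, h2]
    exact hhalfinv he
  refine ⟨?_, ?_, ?_⟩
  · -- part (a)
    intro hnd hmodne
    have ha0' : a ≠ 0 := fun h0 => hnd (ha0.1 h0)
    set v := a.val with hv_def
    have hv0 : v ≠ 0 := fun h0 => ha0' ((ZMod.val_eq_zero a).1 h0)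
    have hvlt : v < n := a.val_lt
    have hva : ((v : ℕ) : ZMod n) = a := ZMod.natCast_zmod_val a
    have hvneg : (-a).val = n - v := by rw [ZMod.neg_val]; simp [ha0']; rfl
    have hvna : ((n - v : ℕ) : ZMod n) = -a := by rw [← hvneg]; exact ZMod.natCast_zmod_val (-a)
    have hnot_both : ¬ (v ≤ n / 2 ∧ n - v ≤ n / 2) := by
      rintro ⟨h1, h2⟩
      have h3 : n % 2 = 0 ∧ v = n / 2 := by omega
      have he : Even n := Nat.even_iff.2 h3.1
      apply hmodne he
      exact key_half he (by rw [← hva, h3.2])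
    rcases le_or_gt v (n / 2) with hcase | hcase
    · obtain ⟨p0, hp0, hup⟩ := abacus_exu hn hcop (h : ℤ) v hcase (by rw [hva, ha_def])
      refine ⟨p0, ⟨hp0.1, Or.inl hp0.2⟩, ?_⟩
      rintro q ⟨hq2, hq | hq⟩
      · exact hup q ⟨hq2, hq⟩
      · exfalso
        have hq3 := abacus_forced hn hcop (-(h : ℤ)) (n - v) (by omega)
          (by rw [hvna, hna]) q hq2 hq
        exact hnot_both ⟨hcase, hq3 ▸ hq2⟩
    · have hcase' : n - v ≤ n / 2 := by omega
      obtain ⟨p0, hp0, hup⟩ := abacus_exu hn hcop (-(h : ℤ)) (n - v) hcase' (by rw [hvna, hna])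
      refine ⟨p0, ⟨hp0.1, Or.inr hp0.2⟩, ?_⟩
      rintro q ⟨hq2, hq | hq⟩
      · exfalso
        have hq3 := abacus_forced hn hcop (h : ℤ) v hvlt (by rw [hva, ha_def]) q hq2 hq
        omega
      · exact hup q ⟨hq2, hq⟩
  · -- part (b)
    intro hdvd
    have ha0' : a = 0 := ha0.2 hdvd
    have hc1 : ((0 : ℕ) : ZMod n) = ((h : ℤ) : ZMod n) * (d : ZMod n)⁻¹ := by
      rw [← ha_def, ha0']; simp
    have hc2 : ((0 : ℕ) : ZMod n) = ((-(h : ℤ) : ℤ) : ZMod n) * (d : ZMod n)⁻¹ := by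
      rw [hna, ha0']; simp
    refine ⟨abacus_exu hn hcop (h : ℤ) 0 (by omega) hc1,
      abacus_exu hn hcop (-(h : ℤ)) 0 (by omega) hc2, ?_⟩
    rintro p hp2 (hp | hp)
    · exact abacus_forced hn hcop (h : ℤ) 0 hn hc1 p hp2 hp
    · exact abacus_forced hn hcop (-(h : ℤ)) 0 hn hc2 p hp2 hp
  · -- part (c)
    intro heven hmod
    have ha2 : a = ((n / 2 : ℕ) : ZMod n) := key_half' heven hmod
    have hane : -a = a := by
      have h1 : a + a = 0 := by
        rw [ha2, ← Nat.cast_add]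
        have h2 : n / 2 + n / 2 = n := by
          obtain ⟨m, hm⟩ := heven; omega
        rw [h2, ZMod.natCast_self]
      linear_combination -h1
    have hjle : n / 2 ≤ n / 2 := le_refl _
    have hjlt : n / 2 < n := Nat.div_lt_self hn one_lt_two
    have hc1 : ((n / 2 : ℕ) : ZMod n) = ((h : ℤ) : ZMod n) * (d : ZMod n)⁻¹ := by
      rw [← ha_def, ha2]
    have hc2 : ((n / 2 : ℕ) : ZMod n) = ((-(h : ℤ) : ℤ) : ZMod n) * (d : ZMod n)⁻¹ := by
      rw [hna, hane, ha2]
    refine ⟨abacus_exu hn hcop (h : ℤ) (n / 2) hjle hc1,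
      abacus_exu hn hcop (-(h : ℤ)) (n / 2) hjle hc2, ?_⟩
    rintro p hp2 (hp | hp)
    · exact abacus_forced hn hcop (h : ℤ) (n / 2) hjlt hc1 p hp2 hp
    · exact abacus_forced hn hcop (-(h : ℤ)) (n / 2) hjlt hc2 p hp2 hp
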